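/- Let H₁, H₂ : [0,∞) → ℝ both satisfy the standing integrability assumptions, with H₁ ≤ H₂ pointwise and H₁(0) = H₂(0). Then q_n^{H₂} ≤ q_n^{H₁} as quadratic forms on ℝ^{n+1} for all n ≥ 0. If moreover both are nonnegative and nonzero in L^1((0,∞)), then t_n^{H₂} ≤ t_n^{H₁} for all n ≥ 0. -/

import Mathlib

open MeasureTheory Set Finset

/-- The real-valued function `ψ_H`. -/
noncomputable def psiH (H : ℝ → ℝ) (s : ℝ) : ℝ :=
  ∫ t in Ioi (0 : ℝ),
    (H 0 * Real.exp (-t) / t - H t * Real.exp (-(s * t)) / (1 - Real.exp (-t)))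

/-- The symmetric bilinear form attached to `q_n^H`. -/
noncomputable def bH (H : ℝ → ℝ) (n : ℕ) (x y : Fin (n + 1) → ℝ) : ℝ :=
  ∑ i, ∑ j, x i * y j * psiH H |(i.1 : ℝ) - (j.1 : ℝ)|

/-- The quadratic form `q_n^H`. -/
noncomputable def qH (H : ℝ → ℝ) (n : ℕ) (x : Fin (n + 1) → ℝ) : ℝ :=
  bH H n x x

/-!
With `r = exp (-t)` one has `exp (-|i - j| * t) = r ^ |i - j|`, so exchanging the finite sum with
the integral defining `ψ_H` gives
`q_n^H(x) = ∫₀^∞ (H 0 * exp (-t) / t * (∑ x)² - H t / (1 - exp (-t)) * K_r(x)) dt`,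
where `K_r(x) = ∑ x_i x_j r^|i-j|` is the Kac–Murdock–Szegő form, positive semidefinite for
`|r| ≤ 1`. Raising `H` with `H 0` fixed therefore lowers `q_n^H`; and for `H ≥ 0` the form is
negative semidefinite on `∑ x = 0`, so the critical point `v_n^H` maximizes `q_n^H` on `∑ x = 1`,
giving `t_n^{H₂} = q^{H₂}(v₂) ≤ q^{H₁}(v₂) ≤ q^{H₁}(v₁) = t_n^{H₁}`. The bound on `(H t - H 0) / t`
is what makes the integrand bounded near `0`.
-/

open Real

lemma one_sub_exp_neg_nonneg {t : ℝ} (ht : 0 ≤ t) : 0 ≤ 1 - exp (-t) := by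
  have := exp_le_one_iff.2 (neg_nonpos.2 ht); linarith

lemma one_sub_exp_neg_pos {t : ℝ} (ht : 0 < t) : 0 < 1 - exp (-t) := by
  have := exp_lt_one_iff.2 (neg_neg_of_pos ht); linarith

lemma one_sub_exp_neg_le (t : ℝ) : 1 - exp (-t) ≤ t := by
  have := add_one_le_exp (-t); linarith

lemma div_one_add_le_one_sub_exp_neg {t : ℝ} (ht : 0 ≤ t) : t / (1 + t) ≤ 1 - exp (-t) := by
  have h : exp (-t) * (1 + t) ≤ 1 := by
    calc exp (-t) * (1 + t) ≤ exp (-t) * exp t := by gcongr; linarith [add_one_le_exp t]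
      _ = 1 := by rw [← exp_add, neg_add_cancel, exp_zero]
  rw [div_le_iff₀ (by linarith)]
  nlinarith [exp_pos (-t)]

lemma inv_one_sub_exp_neg_le {t : ℝ} (ht : 0 < t) : (1 - exp (-t))⁻¹ ≤ 1 + t⁻¹ := by
  calc (1 - exp (-t))⁻¹ ≤ (t / (1 + t))⁻¹ :=
        inv_anti₀ (by positivity) (div_one_add_le_one_sub_exp_neg ht.le)
    _ = 1 + t⁻¹ := by field_simp; ring

lemma abs_inv_sub_inv_one_sub_exp_neg_le {t : ℝ} (ht : 0 < t) :
    |t⁻¹ - (1 - exp (-t))⁻¹| ≤ 1 := by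
  have h1 : t⁻¹ ≤ (1 - exp (-t))⁻¹ := inv_anti₀ (one_sub_exp_neg_pos ht) (one_sub_exp_neg_le t)
  rw [abs_sub_comm, abs_of_nonneg (by linarith)]
  linarith [inv_one_sub_exp_neg_le ht]

lemma exp_neg_mul_div_one_sub_exp_neg_le {s t : ℝ} (hs : 0 ≤ s) (ht : 0 < t) :
    exp (-(s * t)) / (1 - exp (-t)) ≤ 1 + t⁻¹ := by
  rw [div_eq_mul_inv]
  calc exp (-(s * t)) * (1 - exp (-t))⁻¹ ≤ 1 * (1 + t⁻¹) := by
        gcongr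
        · exact inv_nonneg.2 (one_sub_exp_neg_pos ht).le
        · exact exp_le_one_iff.2 (neg_nonpos.2 (by positivity))
        · exact inv_one_sub_exp_neg_le ht
    _ = 1 + t⁻¹ := one_mul _

lemma abs_exp_neg_sub_exp_neg_mul_le {s t : ℝ} (hs : 0 ≤ s) (ht : 0 ≤ t) :
    |exp (-t) - exp (-(s * t))| ≤ (1 + s) * t := by
  have h1 := one_sub_exp_neg_le t
  have h2 := one_sub_exp_neg_le (s * t)
  have h3 := one_sub_exp_neg_nonneg ht
  have h4 := one_sub_exp_neg_nonneg (mul_nonneg hs ht)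
  rw [abs_le]; constructor <;> nlinarith

lemma abs_mul_le_of_le_one_add_inv {a q t x : ℝ} (ht : 0 < t) (hq₀ : 0 ≤ q) (hq : q ≤ 1 + t⁻¹)
    (hx : |x| ≤ a * t) : |x * q| ≤ a * (1 + t) := by
  rw [abs_mul, abs_of_nonneg hq₀]
  calc |x| * q ≤ (a * t) * (1 + t⁻¹) := mul_le_mul hx hq hq₀ ((abs_nonneg x).trans hx)
    _ = a * (1 + t) := by field_simp; ring

/-- The integrand of `psiH`: `psiH H s = ∫ t in Ioi 0, psiIntegrand H s t` holds by `rfl`. -/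
noncomputable def psiIntegrand (H : ℝ → ℝ) (s t : ℝ) : ℝ :=
  H 0 * exp (-t) / t - H t * exp (-(s * t)) / (1 - exp (-t))

lemma aestronglyMeasurable_psiIntegrand {H : ℝ → ℝ} {S : Set ℝ}
    (hH : AEStronglyMeasurable H (volume.restrict S)) (s : ℝ) :
    AEStronglyMeasurable (psiIntegrand H s) (volume.restrict S) := by
  have := hH.aemeasurable
  unfold psiIntegrand
  apply AEMeasurable.aestronglyMeasurable
  fun_prop

lemma abs_psiIntegrand_le (H : ℝ → ℝ) {s t : ℝ} (hs : 0 ≤ s) (ht : 0 < t) :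
    |psiIntegrand H s t| ≤ |H 0| * exp (-t) * t⁻¹ + |H t| * (1 + t⁻¹) := by
  have hq : 0 ≤ exp (-(s * t)) / (1 - exp (-t)) :=
    div_nonneg (exp_pos _).le (one_sub_exp_neg_pos ht).le
  calc |psiIntegrand H s t|
      ≤ |H 0 * exp (-t) * t⁻¹| + |H t * (exp (-(s * t)) / (1 - exp (-t)))| := by
        unfold psiIntegrand; rw [mul_div_assoc (H t)]; exact abs_sub _ _
    _ ≤ |H 0| * exp (-t) * t⁻¹ + |H t| * (1 + t⁻¹) := by
        rw [abs_mul, abs_mul, abs_mul, abs_of_pos (exp_pos _), abs_of_pos (inv_pos.2 ht),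
          abs_of_nonneg hq]
        gcongr
        exact exp_neg_mul_div_one_sub_exp_neg_le hs ht

/-- Each summand stays bounded as `t → 0⁺` when `H` is Lipschitz at `0`. -/
lemma psiIntegrand_eq (H : ℝ → ℝ) (s t : ℝ) :
    psiIntegrand H s t = H 0 * (exp (-t) * (t⁻¹ - (1 - exp (-t))⁻¹)
        + (exp (-t) - exp (-(s * t))) * (1 - exp (-t))⁻¹)
      + (H 0 - H t) * (exp (-(s * t)) / (1 - exp (-t))) := by
  unfold psiIntegrand; ring

lemma abs_psiIntegrand_le_of_abs_div_le (H : ℝ → ℝ) {s t C : ℝ} (hs : 0 ≤ s) (ht : 0 < t)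
    (hC : |(H t - H 0) / t| ≤ C) :
    |psiIntegrand H s t| ≤ |H 0| * (1 + (1 + s) * (1 + t)) + C * (1 + t) := by
  have hD := one_sub_exp_neg_pos ht
  have hlip : |H 0 - H t| ≤ C * t := by
    rw [abs_sub_comm, ← div_le_iff₀ ht]
    rwa [abs_div, abs_of_pos ht] at hC
  have hfirst : |exp (-t) * (t⁻¹ - (1 - exp (-t))⁻¹)| ≤ 1 := by
    rw [abs_mul, abs_of_pos (exp_pos _)]
    exact mul_le_one₀ (exp_le_one_iff.2 (by linarith)) (abs_nonneg _)
      (abs_inv_sub_inv_one_sub_exp_neg_le ht)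
  have hsecond : |(exp (-t) - exp (-(s * t))) * (1 - exp (-t))⁻¹| ≤ (1 + s) * (1 + t) :=
    abs_mul_le_of_le_one_add_inv ht (inv_nonneg.2 hD.le) (inv_one_sub_exp_neg_le ht)
      (abs_exp_neg_sub_exp_neg_mul_le hs ht.le)
  have hthird : |(H 0 - H t) * (exp (-(s * t)) / (1 - exp (-t)))| ≤ C * (1 + t) :=
    abs_mul_le_of_le_one_add_inv ht (div_nonneg (exp_pos _).le hD.le)
      (exp_neg_mul_div_one_sub_exp_neg_le hs ht) hlip
  rw [psiIntegrand_eq]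
  calc _ ≤ |H 0| * (|exp (-t) * (t⁻¹ - (1 - exp (-t))⁻¹)|
          + |(exp (-t) - exp (-(s * t))) * (1 - exp (-t))⁻¹|)
        + |(H 0 - H t) * (exp (-(s * t)) / (1 - exp (-t)))| := by
        grw [abs_add_le, abs_mul, abs_add_le]
    _ ≤ _ := by gcongr

lemma integrableOn_psiIntegrand_Ioi {H : ℝ → ℝ} (hInt : IntegrableOn H (Ici 0)) {s δ : ℝ}
    (hs : 0 ≤ s) (hδ : 0 < δ) : IntegrableOn (psiIntegrand H s) (Ioi δ) := by
  have hH : IntegrableOn H (Ioi δ) := hInt.mono_set (Ioi_subset_Ici hδ.le)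
  have hexp : IntegrableOn (fun t => exp (-t)) (Ioi δ) := by
    simpa using exp_neg_integrableOn_Ioi δ one_pos
  refine Integrable.mono' (g := fun t => |H 0| * exp (-t) * δ⁻¹ + |H t| * (1 + δ⁻¹))
    (((hexp.const_mul _).mul_const _).add (hH.abs.mul_const _))
    (aestronglyMeasurable_psiIntegrand hH.aestronglyMeasurable s) ?_
  filter_upwards [ae_restrict_mem measurableSet_Ioi] with t (ht : δ < t)
  have ht₀ : 0 < t := hδ.trans ht
  calc ‖psiIntegrand H s t‖ ≤ |H 0| * exp (-t) * t⁻¹ + |H t| * (1 + t⁻¹) :=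
        abs_psiIntegrand_le H hs ht₀
    _ ≤ |H 0| * exp (-t) * δ⁻¹ + |H t| * (1 + δ⁻¹) := by gcongr

lemma integrableOn_psiIntegrand_Ioc {H : ℝ → ℝ} {s δ C : ℝ}
    (hH : AEStronglyMeasurable H (volume.restrict (Ioc 0 δ))) (hs : 0 ≤ s)
    (hC : ∀ t ∈ Ioc 0 δ, |(H t - H 0) / t| ≤ C) : IntegrableOn (psiIntegrand H s) (Ioc 0 δ) := by
  refine IntegrableOn.of_bound measure_Ioc_lt_top (aestronglyMeasurable_psiIntegrand hH s)
    (|H 0| * (1 + (1 + s) * (1 + δ)) + C * (1 + δ)) ?_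
  filter_upwards [ae_restrict_mem measurableSet_Ioc] with t ht
  have hC₀ : 0 ≤ C := (abs_nonneg _).trans (hC t ht)
  calc ‖psiIntegrand H s t‖ ≤ |H 0| * (1 + (1 + s) * (1 + t)) + C * (1 + t) :=
        abs_psiIntegrand_le_of_abs_div_le H hs ht.1 (hC t ht)
    _ ≤ |H 0| * (1 + (1 + s) * (1 + δ)) + C * (1 + δ) := by
        have := ht.2; gcongr

lemma integrableOn_psiIntegrand {H : ℝ → ℝ} (hInt : IntegrableOn H (Ici 0))
    (hbd : ∃ ε > (0 : ℝ), ∃ C : ℝ, ∀ t ∈ Ioo (0 : ℝ) ε, |(H t - H 0) / t| ≤ C)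
    {s : ℝ} (hs : 0 ≤ s) : IntegrableOn (psiIntegrand H s) (Ioi 0) := by
  obtain ⟨ε, hε, C, hC⟩ := hbd
  have hδ : 0 < ε / 2 := half_pos hε
  rw [← Ioc_union_Ioi_eq_Ioi hδ.le, integrableOn_union]
  refine ⟨integrableOn_psiIntegrand_Ioc ?_ hs fun t ht => hC t ⟨ht.1, by linarith [ht.2]⟩,
    integrableOn_psiIntegrand_Ioi hInt hs hδ⟩
  exact (hInt.mono_set fun t ht => mem_Ici.2 ht.1.le).aestronglyMeasurable

lemma sum_mul_pow_sub_eq_mul {r : ℝ} (x : ℕ → ℝ) (m : ℕ) :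
    ∑ i ∈ range m, x i * r ^ (m - i) = r * ∑ i ∈ range m, x i * r ^ (m - 1 - i) := by
  rw [mul_sum]
  refine sum_congr rfl fun i hi => ?_
  rw [show m - i = m - 1 - i + 1 by have := mem_range.1 hi; omega, pow_succ]
  ring

/-- `(r ^ |i - j|)` is the Kac–Murdock–Szegő matrix. Appending the row `m` adds `(1 - r²) T²`
to the gap between the two sides, `T` being the inner sum on the left for `m`. -/
lemma sq_sum_mul_pow_le_sum_sum_mul_pow_dist {r : ℝ} (hr : |r| ≤ 1) (x : ℕ → ℝ) (m : ℕ) :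
    (∑ i ∈ range m, x i * r ^ (m - 1 - i)) ^ 2
      ≤ ∑ i ∈ range m, ∑ j ∈ range m, x i * x j * r ^ Nat.dist i j := by
  induction m with
  | zero => simp
  | succ m ih =>
    set T := ∑ i ∈ range m, x i * r ^ (m - 1 - i)
    have hrow : ∑ i ∈ range m, x i * x m * r ^ Nat.dist i m = x m * (r * T) := by
      rw [← sum_mul_pow_sub_eq_mul, mul_sum]
      refine sum_congr rfl fun i hi => ?_
      rw [Nat.dist_eq_sub_of_le (mem_range.1 hi).le]; ring
    have hcol : ∑ j ∈ range m, x m * x j * r ^ Nat.dist m j = x m * (r * T) := by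
      rw [← hrow]
      exact sum_congr rfl fun j _ => by rw [Nat.dist_comm]; ring
    have hT : ∑ i ∈ range (m + 1), x i * r ^ (m + 1 - 1 - i) = r * T + x m := by
      rw [sum_range_succ, Nat.add_sub_cancel, sum_mul_pow_sub_eq_mul, Nat.sub_self, pow_zero,
        mul_one]
    have hK : ∑ i ∈ range (m + 1), ∑ j ∈ range (m + 1), x i * x j * r ^ Nat.dist i j
        = ∑ i ∈ range m, ∑ j ∈ range m, x i * x j * r ^ Nat.dist i j
          + 2 * x m * (r * T) + x m ^ 2 := by
      simp only [sum_range_succ, sum_add_distrib, hrow, hcol, Nat.dist_self, pow_zero]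
      ring
    have hr2 : r ^ 2 ≤ 1 := by nlinarith [sq_abs r, abs_nonneg r]
    rw [hT, hK]
    nlinarith [sq_nonneg T]

lemma sum_sum_mul_pow_dist_nonneg {r : ℝ} (hr : |r| ≤ 1) (n : ℕ) (x : Fin n → ℝ) :
    0 ≤ ∑ i, ∑ j, x i * x j * r ^ Nat.dist i j := by
  obtain ⟨y, rfl⟩ : ∃ y : ℕ → ℝ, x = fun i : Fin n => y i :=
    ⟨fun k => if h : k < n then x ⟨k, h⟩ else 0, funext fun i => by simp⟩
  rw [Fin.sum_univ_eq_sum_range (fun i => ∑ j : Fin n, y i * y j * r ^ Nat.dist i j)]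
  refine (sq_nonneg _).trans ((sq_sum_mul_pow_le_sum_sum_mul_pow_dist hr y n).trans_eq ?_)
  exact sum_congr rfl fun i _ =>
    (Fin.sum_univ_eq_sum_range (fun j => y i * y j * r ^ Nat.dist i j) n).symm

lemma abs_natCast_sub_natCast (a b : ℕ) : |(a : ℝ) - b| = Nat.dist a b := by
  rcases le_total a b with h | h
  · rw [Nat.dist_eq_sub_of_le h, Nat.cast_sub h, abs_sub_comm, abs_of_nonneg (by simpa)]
  · rw [Nat.dist_eq_sub_of_le_right h, Nat.cast_sub h, abs_of_nonneg (by simpa)]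

lemma exp_neg_abs_natCast_sub_mul (a b : ℕ) (t : ℝ) :
    exp (-(|(a : ℝ) - b| * t)) = exp (-t) ^ Nat.dist a b := by
  rw [abs_natCast_sub_natCast, ← exp_nat_mul]; ring_nf

lemma sum_sum_mul_exp_neg_pow_dist_nonneg {t : ℝ} (ht : 0 ≤ t) {n : ℕ} (x : Fin n → ℝ) :
    0 ≤ ∑ i, ∑ j, x i * x j * exp (-t) ^ Nat.dist i j := by
  refine sum_sum_mul_pow_dist_nonneg ?_ n x
  rw [abs_of_pos (exp_pos _)]
  exact exp_le_one_iff.2 (neg_nonpos.2 ht)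

lemma sum_sum_mul_psiIntegrand (H : ℝ → ℝ) {n : ℕ} (x : Fin (n + 1) → ℝ) (t : ℝ) :
    ∑ i, ∑ j, x i * x j * psiIntegrand H |(i.1 : ℝ) - (j.1 : ℝ)| t
      = H 0 * exp (-t) / t * (∑ i, x i) ^ 2
        - H t / (1 - exp (-t)) * ∑ i, ∑ j, x i * x j * exp (-t) ^ Nat.dist i j := by
  rw [sq, sum_mul_sum, mul_sum, mul_sum, ← sum_sub_distrib]
  refine sum_congr rfl fun i _ => ?_
  rw [mul_sum, mul_sum, ← sum_sub_distrib]
  refine sum_congr rfl fun j _ => ?_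
  rw [psiIntegrand, exp_neg_abs_natCast_sub_mul]
  ring

lemma bH_comm (H : ℝ → ℝ) (n : ℕ) (x y : Fin (n + 1) → ℝ) : bH H n x y = bH H n y x := by
  rw [bH, bH, sum_comm]
  refine sum_congr rfl fun i _ => sum_congr rfl fun j _ => ?_
  rw [abs_sub_comm]; ring

lemma qH_add (H : ℝ → ℝ) (n : ℕ) (x y : Fin (n + 1) → ℝ) :
    qH H n (x + y) = qH H n x + 2 * bH H n x y + qH H n y := by
  have hyx := bH_comm H n y x
  simp only [qH, bH, Pi.add_apply, add_mul, mul_add, sum_add_distrib] at hyx ⊢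
  linarith

section IntegralRepresentation

variable {H : ℝ → ℝ} (hInt : IntegrableOn H (Ici 0))
  (hbd : ∃ ε > (0 : ℝ), ∃ C : ℝ, ∀ t ∈ Ioo (0 : ℝ) ε, |(H t - H 0) / t| ≤ C)
include hInt hbd

lemma integrableOn_sum_sum_mul_psiIntegrand {n : ℕ} (x : Fin (n + 1) → ℝ) :
    IntegrableOn (fun t => ∑ i, ∑ j, x i * x j * psiIntegrand H |(i.1 : ℝ) - (j.1 : ℝ)| t)
      (Ioi 0) :=
  integrable_finsetSum _ fun _ _ => integrable_finsetSum _ fun _ _ =>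
    (integrableOn_psiIntegrand hInt hbd (abs_nonneg _)).const_mul _

lemma qH_eq_integral (n : ℕ) (x : Fin (n + 1) → ℝ) :
    qH H n x = ∫ t in Ioi 0, ∑ i, ∑ j, x i * x j * psiIntegrand H |(i.1 : ℝ) - (j.1 : ℝ)| t := by
  have hint : ∀ i j : Fin (n + 1),
      IntegrableOn (psiIntegrand H |(i.1 : ℝ) - (j.1 : ℝ)|) (Ioi 0) := fun _ _ =>
    integrableOn_psiIntegrand hInt hbd (abs_nonneg _)
  rw [qH, bH,
    integral_finsetSum _ fun i _ => integrable_finsetSum _ fun j _ => (hint i j).const_mul _]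
  refine sum_congr rfl fun i _ => ?_
  rw [integral_finsetSum _ fun j _ => (hint i j).const_mul _]
  exact sum_congr rfl fun j _ => (integral_const_mul _ _).symm

lemma qH_nonpos_of_sum_eq_zero (hpos : ∀ t, 0 ≤ t → 0 ≤ H t) {n : ℕ} {y : Fin (n + 1) → ℝ}
    (hy : ∑ i, y i = 0) : qH H n y ≤ 0 := by
  rw [qH_eq_integral hInt hbd]
  refine setIntegral_nonpos measurableSet_Ioi fun t (ht : 0 < t) => ?_
  rw [sum_sum_mul_psiIntegrand, hy]
  have hK := sum_sum_mul_exp_neg_pow_dist_nonneg ht.le y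
  have hD := one_sub_exp_neg_pos ht
  have := hpos t ht.le
  rw [zero_pow two_ne_zero, mul_zero, zero_sub, neg_nonpos]
  positivity

/-- `q_n^H` is concave on the hyperplane `∑ i, v i = 1`, so a critical point maximizes it. -/
lemma qH_le_of_forall_bH_eq_zero (hpos : ∀ t, 0 ≤ t → 0 ≤ H t) {n : ℕ}
    {v w : Fin (n + 1) → ℝ} (hv : ∑ i, v i = 1)
    (hcrit : ∀ y : Fin (n + 1) → ℝ, ∑ i, y i = 0 → bH H n v y = 0) (hw : ∑ i, w i = 1) :
    qH H n w ≤ qH H n v := by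
  have hd : ∑ i, (w - v) i = 0 := by simp [sum_sub_distrib, hv, hw]
  have h := qH_add H n v (w - v)
  rw [add_sub_cancel, hcrit _ hd] at h
  linarith [qH_nonpos_of_sum_eq_zero hInt hbd hpos hd]

end IntegralRepresentation

lemma qH_le_qH_of_le {H₁ H₂ : ℝ → ℝ}
    (hInt₁ : IntegrableOn H₁ (Ici 0)) (hInt₂ : IntegrableOn H₂ (Ici 0))
    (hbd₁ : ∃ ε > (0 : ℝ), ∃ C : ℝ, ∀ t ∈ Ioo (0 : ℝ) ε, |(H₁ t - H₁ 0) / t| ≤ C)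
    (hbd₂ : ∃ ε > (0 : ℝ), ∃ C : ℝ, ∀ t ∈ Ioo (0 : ℝ) ε, |(H₂ t - H₂ 0) / t| ≤ C)
    (hle : ∀ t, 0 ≤ t → H₁ t ≤ H₂ t) (h0 : H₁ 0 = H₂ 0) (n : ℕ) (x : Fin (n + 1) → ℝ) :
    qH H₂ n x ≤ qH H₁ n x := by
  rw [qH_eq_integral hInt₁ hbd₁, qH_eq_integral hInt₂ hbd₂]
  refine setIntegral_mono_on (integrableOn_sum_sum_mul_psiIntegrand hInt₂ hbd₂ x)
    (integrableOn_sum_sum_mul_psiIntegrand hInt₁ hbd₁ x) measurableSet_Ioi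
    fun t (ht : 0 < t) => ?_
  rw [sum_sum_mul_psiIntegrand, sum_sum_mul_psiIntegrand, h0]
  have hK := sum_sum_mul_exp_neg_pow_dist_nonneg ht.le x
  have hD := one_sub_exp_neg_pos ht
  gcongr
  exact hle t ht.le

theorem stmt_12 (H₁ H₂ : ℝ → ℝ)
    (hInt₁ : IntegrableOn H₁ (Ici 0)) (hInt₂ : IntegrableOn H₂ (Ici 0))
    (hbd₁ : ∃ ε > (0 : ℝ), ∃ C : ℝ, ∀ t ∈ Ioo (0 : ℝ) ε, |(H₁ t - H₁ 0) / t| ≤ C)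
    (hbd₂ : ∃ ε > (0 : ℝ), ∃ C : ℝ, ∀ t ∈ Ioo (0 : ℝ) ε, |(H₂ t - H₂ 0) / t| ≤ C)
    (hle : ∀ t, 0 ≤ t → H₁ t ≤ H₂ t) (h0 : H₁ 0 = H₂ 0) :
    (∀ n : ℕ, ∀ x : Fin (n + 1) → ℝ, qH H₂ n x ≤ qH H₁ n x) ∧
    ((∀ t, 0 ≤ t → 0 ≤ H₁ t) → (∀ t, 0 ≤ t → 0 ≤ H₂ t) →
      ¬ (∀ᵐ t ∂(volume.restrict (Ioi (0 : ℝ))), H₁ t = 0) →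
      ¬ (∀ᵐ t ∂(volume.restrict (Ioi (0 : ℝ))), H₂ t = 0) →
      ∀ n : ℕ, ∀ v₁ v₂ : Fin (n + 1) → ℝ,
        (∑ i, v₁ i = 1) → (∀ y : Fin (n + 1) → ℝ, ∑ i, y i = 0 → bH H₁ n v₁ y = 0) →
        (∑ i, v₂ i = 1) → (∀ y : Fin (n + 1) → ℝ, ∑ i, y i = 0 → bH H₂ n v₂ y = 0) →
        qH H₂ n v₂ ≤ qH H₁ n v₁) := by
  have hq := qH_le_qH_of_le hInt₁ hInt₂ hbd₁ hbd₂ hle h0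
  refine ⟨hq, fun hpos₁ _ _ _ n v₁ v₂ hv₁ hcrit₁ hv₂ _ => ?_⟩
  exact (hq n v₂).trans (qH_le_of_forall_bH_eq_zero hInt₁ hbd₁ hpos₁ hv₁ hcrit₁ hv₂)
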